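/- Soundness of the Reluplex calculus, unsatisfiable case: if φ is a conjunction of linear atoms and ReLU atoms and there exists a refutation from φ (a Reluplex derivation from the initial configuration of φ ending in a derivation tree all of whose leaves are UNSAT), then φ is unsatisfiable, i.e., no real assignment satisfies every atom of φ. -/

import Mathlib

open scoped Classical

/-- A (non-distinguished) Reluplex configuration over the variable set `V`:
basic variables, tableau coefficients, lower/upper bounds (possibly infinite),
current assignment, and the set of ReLU pairs. -/
structure Config (V : Type*) where
  basic : Finset V
  T : V → V → ℝ
  l : V → EReal
  u : V → EReal
  α : V → ℝ
  R : Finset (V × V)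

namespace Config

variable {V : Type*} [Fintype V] [DecidableEq V]

/-- The right-hand side `Σ_{j ∉ basic} T i j * β j` of the tableau row of `i`. -/
noncomputable def rowSum (c : Config V) (i : V) (β : V → ℝ) : ℝ :=
  ∑ j ∈ Finset.univ.filter (fun j => j ∉ c.basic), c.T i j * β j

/-- An assignment `β` satisfies all equations of the tableau of `c`. -/
def SatTab (c : Config V) (β : V → ℝ) : Prop :=
  ∀ i ∈ c.basic, β i = c.rowSum i β

/-- An assignment `β` respects all the lower and upper bounds of `c`. -/
def InBounds (c : Config V) (β : V → ℝ) : Prop :=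
  ∀ x, c.l x ≤ (β x : EReal) ∧ (β x : EReal) ≤ c.u x

/-- `slack⁺(x_i)`. -/
def slackPos (c : Config V) (i : V) : Set V :=
  { j | j ∉ c.basic ∧
      ((0 < c.T i j ∧ (c.α j : EReal) < c.u j) ∨ (c.T i j < 0 ∧ c.l j < (c.α j : EReal))) }

/-- `slack⁻(x_i)`. -/
def slackNeg (c : Config V) (i : V) : Set V :=
  { j | j ∉ c.basic ∧
      ((c.T i j < 0 ∧ (c.α j : EReal) < c.u j) ∨ (0 < c.T i j ∧ c.l j < (c.α j : EReal))) }

/-- The `pivot(T,i,j)` operation: `x_i` leaves the basis and `x_j` enters it;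
the row of `x_i` is solved for `x_j`, and the result is substituted for `x_j`
in all other rows. -/
noncomputable def pivotConfig (c : Config V) (i j : V) : Config V :=
  { c with
    basic := insert j (c.basic.erase i)
    T := fun r k =>
      if r = j then (if k = i then 1 / c.T i j else - (c.T i k / c.T i j))
      else (if k = i then c.T r j / c.T i j
            else c.T r k - c.T r j * c.T i k / c.T i j) }

/-- The `update(α, x_j, δ)` operation for a non-basic variable `x_j`. -/
noncomputable def updateConfig (c : Config V) (j : V) (δ : ℝ) : Config V :=
  { c with
    α := fun k =>
      if k = j then c.α k + δ
      else if k ∈ c.basic then c.α k + δ * c.T k j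
      else c.α k }

/-- The candidate tighter lower bound `Σ_{T i j>0} T i j * l j + Σ_{T i j<0} T i j * u j`. -/
noncomputable def derivedLower (c : Config V) (i : V) : EReal :=
  (∑ j ∈ Finset.univ.filter (fun j => j ∉ c.basic ∧ 0 < c.T i j),
      (c.T i j : EReal) * c.l j)
  + ∑ j ∈ Finset.univ.filter (fun j => j ∉ c.basic ∧ c.T i j < 0),
      (c.T i j : EReal) * c.u j

/-- The candidate tighter upper bound `Σ_{T i j>0} T i j * u j + Σ_{T i j<0} T i j * l j`. -/
noncomputable def derivedUpper (c : Config V) (i : V) : EReal :=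
  (∑ j ∈ Finset.univ.filter (fun j => j ∉ c.basic ∧ 0 < c.T i j),
      (c.T i j : EReal) * c.u j)
  + ∑ j ∈ Finset.univ.filter (fun j => j ∉ c.basic ∧ c.T i j < 0),
      (c.T i j : EReal) * c.l j

end Config

/-- A Reluplex configuration: either one of the distinguished symbols `SAT`, `UNSAT`,
or a tuple `⟨B, T, l, u, α, R⟩`. -/
inductive RConfig (V : Type*) where
  | SAT : RConfig V
  | UNSAT : RConfig V
  | node : Config V → RConfig V

/-- One application of a Reluplex derivation rule to the configuration `c`,
producing the given list of child configurations. -/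
inductive Step {V : Type*} [Fintype V] [DecidableEq V] :
    Config V → List (RConfig V) → Prop
  | pivot1 (c : Config V) (i j : V) (hi : i ∈ c.basic)
      (hlo : (c.α i : EReal) < c.l i) (hj : j ∈ c.slackPos i) :
      Step c [RConfig.node (c.pivotConfig i j)]
  | pivot2 (c : Config V) (i j : V) (hi : i ∈ c.basic)
      (hhi : c.u i < (c.α i : EReal)) (hj : j ∈ c.slackNeg i) :
      Step c [RConfig.node (c.pivotConfig i j)]
  | update (c : Config V) (j : V) (δ : ℝ) (hj : j ∉ c.basic)
      (hviol : (c.α j : EReal) < c.l j ∨ c.u j < (c.α j : EReal))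
      (hlo : c.l j ≤ ((c.α j + δ : ℝ) : EReal))
      (hhi : ((c.α j + δ : ℝ) : EReal) ≤ c.u j) :
      Step c [RConfig.node (c.updateConfig j δ)]
  | failure (c : Config V) (i : V) (hi : i ∈ c.basic)
      (h : ((c.α i : EReal) < c.l i ∧ c.slackPos i = ∅) ∨
           (c.u i < (c.α i : EReal) ∧ c.slackNeg i = ∅)) :
      Step c [RConfig.UNSAT]
  | updateB (c : Config V) (i j : V) (hR : (i, j) ∈ c.R) (hi : i ∉ c.basic)
      (hne : c.α j ≠ max 0 (c.α i)) (hpos : 0 ≤ c.α j) :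
      Step c [RConfig.node (c.updateConfig i (c.α j - c.α i))]
  | updateF (c : Config V) (i j : V) (hR : (i, j) ∈ c.R) (hj : j ∉ c.basic)
      (hne : c.α j ≠ max 0 (c.α i)) :
      Step c [RConfig.node (c.updateConfig j (max 0 (c.α i) - c.α j))]
  | pivotForRelu (c : Config V) (i j : V) (hi : i ∈ c.basic)
      (hrel : ∃ x, (i, x) ∈ c.R ∨ (x, i) ∈ c.R) (hj : j ∉ c.basic)
      (hT : c.T i j ≠ 0) :
      Step c [RConfig.node (c.pivotConfig i j)]
  | reluSplit (c : Config V) (i j : V) (hR : (i, j) ∈ c.R)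
      (hl : c.l i < 0) (hu : 0 < c.u i) :
      Step c [RConfig.node { c with u := fun k => if k = i then 0 else c.u k },
              RConfig.node { c with l := fun k => if k = i then 0 else c.l k }]
  | reluSuccess (c : Config V) (hb : c.InBounds c.α)
      (hr : ∀ p ∈ c.R, c.α p.2 = max 0 (c.α p.1)) :
      Step c [RConfig.SAT]
  | deriveLowerBound (c : Config V) (i : V) (hi : i ∈ c.basic)
      (h : c.l i < c.derivedLower i) :
      Step c [RConfig.node { c with l := fun k => if k = i then c.derivedLower i else c.l k }]
  | deriveUpperBound (c : Config V) (i : V) (hi : i ∈ c.basic)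
      (h : c.derivedUpper i < c.u i) :
      Step c [RConfig.node { c with u := fun k => if k = i then c.derivedUpper i else c.u k }]

/-- Derivation trees: trees of Reluplex configurations. -/
inductive DTree (V : Type*) where
  | leaf : RConfig V → DTree V
  | node : RConfig V → List (DTree V) → DTree V

namespace DTree

variable {V : Type*}

/-- The configuration at the root of a derivation tree. -/
def root : DTree V → RConfig V
  | DTree.leaf s => s
  | DTree.node s _ => s

/-- `Mem s t`: the configuration `s` appears (as some node) in the tree `t`. -/
inductive Mem : RConfig V → DTree V → Prop
  | leaf (s : RConfig V) : Mem s (DTree.leaf s)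
  | root (s : RConfig V) (ts : List (DTree V)) : Mem s (DTree.node s ts)
  | child {s s' : RConfig V} {t : DTree V} {ts : List (DTree V)}
      (h : Mem s t) (ht : t ∈ ts) : Mem s (DTree.node s' ts)

/-- `LeafMem s t`: the configuration `s` appears as a leaf of the tree `t`. -/
inductive LeafMem : RConfig V → DTree V → Prop
  | leaf (s : RConfig V) : LeafMem s (DTree.leaf s)
  | child {s s' : RConfig V} {t : DTree V} {ts : List (DTree V)}
      (h : LeafMem s t) (ht : t ∈ ts) : LeafMem s (DTree.node s' ts)

/-- `Sub t t'`: `t` is a subtree of `t'`. -/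
inductive Sub : DTree V → DTree V → Prop
  | refl (t : DTree V) : Sub t t
  | child {t t' : DTree V} {s : RConfig V} {ts : List (DTree V)}
      (h : Sub t t') (ht : t' ∈ ts) : Sub t (DTree.node s ts)

end DTree

/-- `Expand D D'`: `D'` is obtained from `D` by applying exactly one derivation
rule to one of the leaves of `D`. -/
inductive Expand {V : Type*} [Fintype V] [DecidableEq V] : DTree V → DTree V → Prop
  | here {c : Config V} {ts : List (RConfig V)} (h : Step c ts) :
      Expand (DTree.leaf (RConfig.node c)) (DTree.node (RConfig.node c) (ts.map DTree.leaf))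
  | child {s : RConfig V} {pre post : List (DTree V)} {t t' : DTree V}
      (h : Expand t t') :
      Expand (DTree.node s (pre ++ t :: post)) (DTree.node s (pre ++ t' :: post))

/-- `IsDerivation s0 m D`: `D 0, D 1, …, D m` is a Reluplex derivation starting
from the derivation tree consisting of the single node `s0`. -/
def IsDerivation {V : Type*} [Fintype V] [DecidableEq V]
    (s0 : Config V) (m : ℕ) (D : ℕ → DTree V) : Prop :=
  D 0 = DTree.leaf (RConfig.node s0) ∧ ∀ i < m, Expand (D i) (D (i + 1))

/-- The relation symbol of a linear atom: `=`, `≤` or `≥`. -/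
inductive LinRel where
  | eq : LinRel
  | le : LinRel
  | ge : LinRel

/-- A linear atom `Σ_j coeff j * x_j ⋈ d` over the variables `Fin n`. -/
structure LinAtom (n : ℕ) where
  coeff : Fin n → ℝ
  rel : LinRel
  d : ℝ

/-- The assignment `β` satisfies the linear atom `a`. -/
def LinAtom.Holds {n : ℕ} (a : LinAtom n) (β : Fin n → ℝ) : Prop :=
  match a.rel with
  | LinRel.eq => ∑ j, a.coeff j * β j = a.d
  | LinRel.le => ∑ j, a.coeff j * β j ≤ a.d
  | LinRel.ge => a.d ≤ ∑ j, a.coeff j * β j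

/-- A conjunction `φ` of linear atoms and ReLU atoms `ReLU(x, y)` over the
variables `Fin n`. -/
structure Phi (n : ℕ) where
  lin : List (LinAtom n)
  relu : Finset (Fin n × Fin n)

/-- The assignment `β` satisfies every atom of `φ`. -/
def Phi.Sat {n : ℕ} (φ : Phi n) (β : Fin n → ℝ) : Prop :=
  (∀ a ∈ φ.lin, a.Holds β) ∧ ∀ p ∈ φ.relu, β p.2 = max 0 (β p.1)

/-- `φ` is satisfiable: some real assignment satisfies every atom of `φ`. -/
def Phi.Satisfiable {n : ℕ} (φ : Phi n) : Prop :=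
  ∃ β : Fin n → ℝ, φ.Sat β

/-- The initial configuration of `φ`: for the `a`-th linear atom a fresh basic
variable `Sum.inr a` is introduced, with tableau row `Σ_j coeff j * x_j` and with
`d` as its corresponding bound(s); all original variables `Sum.inl j` are
non-basic and unbounded, except that forward-facing ReLU variables get lower
bound `0`; the assignment is identically `0`; and `R` consists of the ReLU atoms. -/
noncomputable def Phi.init {n : ℕ} (φ : Phi n) :
    Config (Fin n ⊕ Fin φ.lin.length) :=
  { basic := Finset.univ.filter (fun v => v.isRight)
    T := fun r k =>
      match r, k with
      | Sum.inr a, Sum.inl j => (φ.lin.get a).coeff j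
      | _, _ => 0
    l := fun v =>
      match v with
      | Sum.inl j => if ∃ x, (x, j) ∈ φ.relu then (0 : EReal) else ⊥
      | Sum.inr a =>
        match (φ.lin.get a).rel with
        | LinRel.eq => ((φ.lin.get a).d : EReal)
        | LinRel.ge => ((φ.lin.get a).d : EReal)
        | LinRel.le => ⊥
    u := fun v =>
      match v with
      | Sum.inl _ => ⊤
      | Sum.inr a =>
        match (φ.lin.get a).rel with
        | LinRel.eq => ((φ.lin.get a).d : EReal)
        | LinRel.le => ((φ.lin.get a).d : EReal)
        | LinRel.ge => ⊤
    α := fun _ => 0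
    R := φ.relu.image (fun p => (Sum.inl p.1, Sum.inl p.2)) }

/-!
Fix a solution `β` of `φ` and extend it to the slack variables by evaluating the linear
forms. The invariant "the current assignment solves the tableau, and `β` solves the tableau,
the bounds and the ReLU constraints" holds initially, and every rule application to a
configuration satisfying it produces at least one child that satisfies it or is `SAT`:
pivots and updates preserve solutions of the tableau, derived bounds are implied by the
tableau and the old bounds, and `β` lies on one side of every ReLU split. `Failure` never
applies, because empty slack would make `β` violate the same bound as the current assignment.
So every tree of the derivation keeps a leaf other than `UNSAT`.
-/

theorem EReal.mul_le_mul_of_nonpos_left {a b c : EReal} (h : b ≤ a) (hc : c ≤ 0) :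
    c * a ≤ c * b := by
  rw [mul_comm c, mul_comm c]
  exact EReal.mul_le_mul_of_nonpos_right h hc

theorem EReal.coe_finset_sum {ι : Type*} (s : Finset ι) (f : ι → ℝ) :
    ((∑ i ∈ s, f i : ℝ) : EReal) = ∑ i ∈ s, (f i : EReal) :=
  map_sum (⟨⟨Real.toEReal, EReal.coe_zero⟩, EReal.coe_add⟩ : ℝ →+ EReal) f s

namespace Config

open Finset

section Slack

variable {V : Type*} {c : Config V} {i j : V}

theorem T_ne_zero_of_mem_slackPos (hj : j ∈ c.slackPos i) : c.T i j ≠ 0 := by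
  rcases hj.2 with ⟨hT, _⟩ | ⟨hT, _⟩
  exacts [hT.ne', hT.ne]

theorem T_ne_zero_of_mem_slackNeg (hj : j ∈ c.slackNeg i) : c.T i j ≠ 0 := by
  rcases hj.2 with ⟨hT, _⟩ | ⟨hT, _⟩
  exacts [hT.ne, hT.ne']

end Slack

variable {V : Type*} [Fintype V] [DecidableEq V]

def nonbasic (c : Config V) : Finset V :=
  univ.filter (fun j => j ∉ c.basic)

@[simp]
theorem mem_nonbasic {c : Config V} {j : V} : j ∈ c.nonbasic ↔ j ∉ c.basic := by
  simp [nonbasic]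

theorem rowSum_eq_add_sum_erase (c : Config V) (r : V) (β : V → ℝ) {j : V}
    (hj : j ∉ c.basic) :
    c.rowSum r β = c.T r j * β j + ∑ k ∈ c.nonbasic.erase j, c.T r k * β k :=
  (add_sum_erase _ _ (mem_nonbasic.2 hj)).symm

theorem satTab_zero (c : Config V) : c.SatTab 0 := by
  intro i _
  simp [rowSum]

def IsSolution (c : Config V) (β : V → ℝ) : Prop :=
  c.SatTab β ∧ c.InBounds β ∧ ∀ p ∈ c.R, β p.2 = max 0 (β p.1)

section Pivot

variable (c : Config V) {i j : V}

theorem nonbasic_pivotConfig (hi : i ∈ c.basic) (hj : j ∉ c.basic) :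
    (c.pivotConfig i j).nonbasic = insert i (c.nonbasic.erase j) := by
  have hij : i ≠ j := fun h => hj (h ▸ hi)
  ext k
  simp only [pivotConfig, mem_nonbasic, mem_insert, mem_erase, not_or, not_and]
  by_cases hk : k = i
  · subst hk; simp [hij, hi]
  · by_cases hkj : k = j
    · subst hkj; simp [Ne.symm hij, hj]
    · tauto

theorem SatTab.pivotConfig (hi : i ∈ c.basic) (hj : j ∉ c.basic) (hT : c.T i j ≠ 0)
    {γ : V → ℝ} (h : c.SatTab γ) : (c.pivotConfig i j).SatTab γ := by
  have hiS : i ∉ c.nonbasic.erase j := fun h' => mem_nonbasic.1 (mem_of_mem_erase h') hi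
  have hrow : ∀ r, (c.pivotConfig i j).rowSum r γ = (c.pivotConfig i j).T r i * γ i
      + ∑ k ∈ c.nonbasic.erase j, (c.pivotConfig i j).T r k * γ k := fun r => by
    rw [rowSum, ← nonbasic, nonbasic_pivotConfig c hi hj, sum_insert hiS]
  have hγi := (h i hi).trans (c.rowSum_eq_add_sum_erase i γ hj)
  intro r hr
  rw [hrow]
  rcases mem_insert.1 hr with rfl | hr
  · have hcoeff : ∀ k ∈ c.nonbasic.erase r, (c.pivotConfig i r).T r k * γ k
        = -(1 / c.T i r) * (c.T i k * γ k) := fun k hk => by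
      simp only [Config.pivotConfig, if_true, if_neg (ne_of_mem_of_not_mem hk hiS)]
      ring
    rw [sum_congr rfl hcoeff, ← mul_sum, hγi]
    simp only [Config.pivotConfig, if_true]
    field_simp
    ring
  · obtain ⟨-, hrb⟩ := mem_erase.1 hr
    have hrj : r ≠ j := fun e => hj (e ▸ hrb)
    have hcoeff : ∀ k ∈ c.nonbasic.erase j, (c.pivotConfig i j).T r k * γ k
        = c.T r k * γ k - c.T r j / c.T i j * (c.T i k * γ k) := fun k hk => by
      simp only [Config.pivotConfig, if_neg hrj, if_neg (ne_of_mem_of_not_mem hk hiS)]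
      ring
    rw [sum_congr rfl hcoeff, sum_sub_distrib, ← mul_sum, hγi,
      (h r hrb).trans (c.rowSum_eq_add_sum_erase r γ hj)]
    simp only [Config.pivotConfig, if_neg hrj, if_true]
    field_simp
    ring

theorem IsSolution.pivotConfig (hi : i ∈ c.basic) (hj : j ∉ c.basic) (hT : c.T i j ≠ 0)
    {β : V → ℝ} (h : c.IsSolution β) : (c.pivotConfig i j).IsSolution β :=
  ⟨h.1.pivotConfig c hi hj hT, h.2⟩

end Pivot

theorem SatTab.updateConfig {c : Config V} {j : V} (hj : j ∉ c.basic) (δ : ℝ)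
    (h : c.SatTab c.α) : (c.updateConfig j δ).SatTab (c.updateConfig j δ).α := by
  intro r hr
  have hrj : r ≠ j := fun e => hj (e ▸ hr)
  have hrest : ∀ k ∈ c.nonbasic.erase j, c.T r k * (c.updateConfig j δ).α k = c.T r k * c.α k :=
    fun k hk => by
      simp [Config.updateConfig, ne_of_mem_erase hk, mem_nonbasic.1 (mem_of_mem_erase hk)]
  change r ∈ c.basic at hr
  change _ = c.rowSum r _
  rw [c.rowSum_eq_add_sum_erase r _ hj, sum_congr rfl hrest]
  simp only [Config.updateConfig, if_true, if_neg hrj, if_pos hr]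
  rw [h r hr, c.rowSum_eq_add_sum_erase r _ hj]
  ring

theorem rowSum_le_rowSum (c : Config V) (i : V) {x y : V → ℝ}
    (hpos : ∀ j ∉ c.basic, 0 < c.T i j → x j ≤ y j)
    (hneg : ∀ j ∉ c.basic, c.T i j < 0 → y j ≤ x j) :
    c.rowSum i x ≤ c.rowSum i y := by
  refine sum_le_sum fun j hj => ?_
  have hj := mem_nonbasic.1 hj
  rcases lt_trichotomy (c.T i j) 0 with hT | hT | hT
  · exact mul_le_mul_of_nonpos_left (hneg j hj hT) hT.le
  · simp [hT]
  · exact mul_le_mul_of_nonneg_left (hpos j hj hT) hT.le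

variable {c : Config V} {β : V → ℝ} {i : V}

theorem IsSolution.le_of_slackPos_eq_empty (h : c.IsSolution β) (hα : c.SatTab c.α)
    (hi : i ∈ c.basic) (hslack : c.slackPos i = ∅) : β i ≤ c.α i := by
  have hnot : ∀ j, j ∉ c.slackPos i := by simp [hslack]
  simp only [slackPos, Set.mem_ofPred_eq, not_and, not_or, not_lt] at hnot
  rw [h.1 i hi, hα i hi]
  refine c.rowSum_le_rowSum i (fun j hj hT => ?_) (fun j hj hT => ?_)
  · exact EReal.coe_le_coe_iff.1 ((h.2.1 j).2.trans ((hnot j hj).1 hT))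
  · exact EReal.coe_le_coe_iff.1 (((hnot j hj).2 hT).trans (h.2.1 j).1)

theorem IsSolution.le_of_slackNeg_eq_empty (h : c.IsSolution β) (hα : c.SatTab c.α)
    (hi : i ∈ c.basic) (hslack : c.slackNeg i = ∅) : c.α i ≤ β i := by
  have hnot : ∀ j, j ∉ c.slackNeg i := by simp [hslack]
  simp only [slackNeg, Set.mem_ofPred_eq, not_and, not_or, not_lt] at hnot
  rw [h.1 i hi, hα i hi]
  refine c.rowSum_le_rowSum i (fun j hj hT => ?_) (fun j hj hT => ?_)
  · exact EReal.coe_le_coe_iff.1 (((hnot j hj).2 hT).trans (h.2.1 j).1)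
  · exact EReal.coe_le_coe_iff.1 ((h.2.1 j).2.trans ((hnot j hj).1 hT))

theorem IsSolution.derivedLower_le (h : c.IsSolution β) (hi : i ∈ c.basic) :
    c.derivedLower i ≤ β i := by
  rw [h.1 i hi, derivedLower, rowSum, sum_filter, sum_filter, sum_filter, ← sum_add_distrib,
    EReal.coe_finset_sum]
  refine sum_le_sum fun j _ => ?_
  by_cases hj : j ∈ c.basic
  · simp [hj]
  rcases lt_trichotomy (c.T i j) 0 with hT | hT | hT
  · simpa [hj, hT, hT.not_gt] using
      EReal.mul_le_mul_of_nonpos_left (h.2.1 j).2 (EReal.coe_nonpos.2 hT.le)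
  · simp [hT]
  · simpa [hj, hT, hT.not_gt] using
      mul_le_mul_of_nonneg_left (h.2.1 j).1 (EReal.coe_nonneg.2 hT.le)

theorem IsSolution.le_derivedUpper (h : c.IsSolution β) (hi : i ∈ c.basic) :
    β i ≤ c.derivedUpper i := by
  rw [h.1 i hi, derivedUpper, rowSum, sum_filter, sum_filter, sum_filter, ← sum_add_distrib,
    EReal.coe_finset_sum]
  refine sum_le_sum fun j _ => ?_
  by_cases hj : j ∈ c.basic
  · simp [hj]
  rcases lt_trichotomy (c.T i j) 0 with hT | hT | hT
  · simpa [hj, hT, hT.not_gt] using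
      EReal.mul_le_mul_of_nonpos_left (h.2.1 j).1 (EReal.coe_nonpos.2 hT.le)
  · simp [hT]
  · simpa [hj, hT, hT.not_gt] using
      mul_le_mul_of_nonneg_left (h.2.1 j).2 (EReal.coe_nonneg.2 hT.le)

theorem IsSolution.setLower (h : c.IsSolution β) {b : EReal} (hb : b ≤ β i) :
    ({ c with l := fun k => if k = i then b else c.l k } : Config V).IsSolution β := by
  refine ⟨h.1, fun k => ⟨?_, (h.2.1 k).2⟩, h.2.2⟩
  dsimp only
  split_ifs with hk
  · exact hk ▸ hb
  · exact (h.2.1 k).1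

theorem IsSolution.setUpper (h : c.IsSolution β) {b : EReal} (hb : β i ≤ b) :
    ({ c with u := fun k => if k = i then b else c.u k } : Config V).IsSolution β := by
  refine ⟨h.1, fun k => ⟨(h.2.1 k).1, ?_⟩, h.2.2⟩
  dsimp only
  split_ifs with hk
  · exact hk ▸ hb
  · exact (h.2.1 k).2

end Config

namespace RConfig

variable {V : Type*} [Fintype V] [DecidableEq V]

/-- `SAT` is admitted: only `UNSAT` leaves have to be ruled out. -/
def Admits (β : V → ℝ) : RConfig V → Prop
  | SAT => True
  | UNSAT => False
  | node c => c.SatTab c.α ∧ c.IsSolution β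

variable {c : Config V} {β : V → ℝ} {i j : V}

theorem Admits.pivotConfig (h : (node c).Admits β) (hi : i ∈ c.basic) (hj : j ∉ c.basic)
    (hT : c.T i j ≠ 0) : (node (c.pivotConfig i j)).Admits β :=
  ⟨h.1.pivotConfig c hi hj hT, h.2.pivotConfig c hi hj hT⟩

theorem Admits.updateConfig (h : (node c).Admits β) (hj : j ∉ c.basic) (δ : ℝ) :
    (node (c.updateConfig j δ)).Admits β :=
  ⟨h.1.updateConfig hj δ, h.2⟩

end RConfig

open RConfig in
theorem Step.exists_admits {V : Type*} [Fintype V] [DecidableEq V] {c : Config V}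
    {ts : List (RConfig V)} (hs : Step c ts) {β : V → ℝ} (h : (node c).Admits β) :
    ∃ s ∈ ts, s.Admits β := by
  obtain ⟨hα, hβ⟩ := h
  cases hs with
  | pivot1 i j hi _ hj =>
    exact ⟨_, List.mem_singleton_self _,
      Admits.pivotConfig ⟨hα, hβ⟩ hi hj.1 (Config.T_ne_zero_of_mem_slackPos hj)⟩
  | pivot2 i j hi _ hj =>
    exact ⟨_, List.mem_singleton_self _,
      Admits.pivotConfig ⟨hα, hβ⟩ hi hj.1 (Config.T_ne_zero_of_mem_slackNeg hj)⟩
  | pivotForRelu i j hi _ hj hT =>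
    exact ⟨_, List.mem_singleton_self _, Admits.pivotConfig ⟨hα, hβ⟩ hi hj hT⟩
  | update j δ hj =>
    exact ⟨_, List.mem_singleton_self _, Admits.updateConfig ⟨hα, hβ⟩ hj δ⟩
  | updateB i j _ hi =>
    exact ⟨_, List.mem_singleton_self _, Admits.updateConfig ⟨hα, hβ⟩ hi _⟩
  | updateF i j _ hj =>
    exact ⟨_, List.mem_singleton_self _, Admits.updateConfig ⟨hα, hβ⟩ hj _⟩
  | failure i hi hfail =>
    exfalso
    rcases hfail with ⟨hlt, hslack⟩ | ⟨hlt, hslack⟩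
    · have := EReal.coe_le_coe_iff.2 (hβ.le_of_slackPos_eq_empty hα hi hslack)
      exact (hlt.trans_le (hβ.2.1 i).1).not_ge this
    · have := EReal.coe_le_coe_iff.2 (hβ.le_of_slackNeg_eq_empty hα hi hslack)
      exact ((hβ.2.1 i).2.trans_lt hlt).not_ge this
  | reluSplit i j =>
    rcases le_or_gt (β i) 0 with hneg | hpos
    · exact ⟨_, List.mem_cons_self, hα, hβ.setUpper (EReal.coe_nonpos.2 hneg)⟩
    · exact ⟨_, List.mem_cons_of_mem _ (List.mem_singleton_self _), hα,
        hβ.setLower (EReal.coe_nonneg.2 hpos.le)⟩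
  | reluSuccess => exact ⟨_, List.mem_singleton_self _, trivial⟩
  | deriveLowerBound i hi =>
    exact ⟨_, List.mem_singleton_self _, hα, hβ.setLower (hβ.derivedLower_le hi)⟩
  | deriveUpperBound i hi =>
    exact ⟨_, List.mem_singleton_self _, hα, hβ.setUpper (hβ.le_derivedUpper hi)⟩

theorem DTree.leafMem_node_iff {V : Type*} {s s' : RConfig V} {ts : List (DTree V)} :
    LeafMem s (node s' ts) ↔ ∃ t ∈ ts, LeafMem s t := by
  constructor
  · rintro (_ | ⟨hs, ht⟩)
    exact ⟨_, ht, hs⟩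
  · rintro ⟨t, ht, hs⟩
    exact .child hs ht

section Derivation

variable {V : Type*} [Fintype V] [DecidableEq V] {P : RConfig V → Prop}

theorem Expand.exists_leafMem (hP : ∀ {c ts}, Step c ts → P (.node c) → ∃ s ∈ ts, P s)
    {t t' : DTree V} (he : Expand t t') :
    (∃ s, DTree.LeafMem s t ∧ P s) → ∃ s, DTree.LeafMem s t' ∧ P s := by
  induction he with
  | here hstep =>
    rintro ⟨s, hs, hPs⟩
    cases hs
    obtain ⟨s', hs', hPs'⟩ := hP hstep hPs
    exact ⟨s', .child (.leaf s') (List.mem_map_of_mem hs'), hPs'⟩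
  | child _ ih =>
    rintro ⟨s, hs, hPs⟩
    obtain ⟨u, hu, hsu⟩ := DTree.leafMem_node_iff.1 hs
    simp only [List.mem_append, List.mem_cons] at hu
    rcases hu with hu | rfl | hu
    · exact ⟨s, .child hsu (by simp [hu]), hPs⟩
    · obtain ⟨s', hs', hPs'⟩ := ih ⟨s, hsu, hPs⟩
      exact ⟨s', .child hs' (by simp), hPs'⟩
    · exact ⟨s, .child hsu (by simp [hu]), hPs⟩

theorem IsDerivation.exists_leafMem {s₀ : Config V} {m : ℕ} {D : ℕ → DTree V}
    (hD : IsDerivation s₀ m D) (hP : ∀ {c ts}, Step c ts → P (.node c) → ∃ s ∈ ts, P s)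
    (h₀ : P (.node s₀)) : ∃ s, DTree.LeafMem s (D m) ∧ P s := by
  suffices ∀ k ≤ m, ∃ s, DTree.LeafMem s (D k) ∧ P s from this m le_rfl
  intro k hk
  induction k with
  | zero => exact ⟨_, hD.1 ▸ .leaf _, h₀⟩
  | succ k ih => exact (hD.2 k hk).exists_leafMem hP (ih (Nat.le_of_succ_le hk))

end Derivation

namespace Phi

open Finset

variable {n : ℕ} (φ : Phi n)

def extend (β : Fin n → ℝ) : Fin n ⊕ Fin φ.lin.length → ℝ :=
  Sum.elim β fun a => ∑ j, (φ.lin.get a).coeff j * β j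

theorem init_rowSum (a : Fin φ.lin.length) (δ : Fin n ⊕ Fin φ.lin.length → ℝ) :
    φ.init.rowSum (.inr a) δ = ∑ j, (φ.lin.get a).coeff j * δ (.inl j) := by
  rw [Config.rowSum, sum_filter, Fintype.sum_sum_type]
  simp [Phi.init]

theorem init_satTab_extend (β : Fin n → ℝ) : φ.init.SatTab (φ.extend β) := by
  rintro (j | a) hr
  · simp [Phi.init] at hr
  · rw [init_rowSum]
    rfl

theorem init_inBounds_extend {β : Fin n → ℝ} (h : φ.Sat β) : φ.init.InBounds (φ.extend β) := by
  rintro (j | a)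
  · refine ⟨?_, le_top⟩
    change (if ∃ x, (x, j) ∈ φ.relu then (0 : EReal) else ⊥) ≤ β j
    split_ifs with hj
    · obtain ⟨x, hx⟩ := hj
      rw [h.2 _ hx]
      exact EReal.coe_nonneg.2 (le_max_left _ _)
    · exact bot_le
  · have hholds := h.1 _ (List.get_mem φ.lin a)
    unfold LinAtom.Holds at hholds
    simp only [Phi.init, Phi.extend, Sum.elim_inr]
    split <;> simp_all

theorem init_admits_extend {β : Fin n → ℝ} (h : φ.Sat β) :
    (RConfig.node φ.init).Admits (φ.extend β) :=
  ⟨φ.init.satTab_zero, φ.init_satTab_extend β, φ.init_inBounds_extend h, fun _ hq => by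
    obtain ⟨p, hp, rfl⟩ := mem_image.1 hq
    exact h.2 p hp⟩

end Phi

/-- soundness of Reluplex, unsatisfiable case. If there is a
refutation from `φ` — a derivation from the initial configuration of `φ` ending in
a tree all of whose leaves are `UNSAT` — then `φ` is unsatisfiable. -/
theorem reluplex_sound_unsat {n : ℕ} (φ : Phi n)
    (m : ℕ) (D : ℕ → DTree (Fin n ⊕ Fin φ.lin.length))
    (hD : IsDerivation φ.init m D)
    (href : ∀ s, DTree.LeafMem s (D m) → s = RConfig.UNSAT) :
    ¬ φ.Satisfiable := by
  rintro ⟨β, hβ⟩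
  obtain ⟨s, hs, hadmits⟩ :=
    hD.exists_leafMem (fun hstep => hstep.exists_admits) (φ.init_admits_extend hβ)
  rw [href s hs] at hadmits
  exact hadmits
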